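/- Let ζ = exp(2πi/36). Then |ζ⁷ + ζ³ − ζ| = 4·cos(π/9)·cos(2π/9) · |ζ¹¹ − ζ⁷ + ζ⁵ − ζ³ + ζ|. -/

import Mathlib

/-!
Write `P = ζ¹¹ − ζ⁷ + ζ⁵ − ζ³ + ζ`. Since `ζ⁶` is a primitive sixth root of unity, `ζ` satisfies
`ζ¹² − ζ⁶ + 1 = 0`, and modulo this relation `ζ⁶ (ζ⁷ + ζ³ − ζ) = (ζ⁴ + 1)(ζ⁸ + 1) P`.
Taking norms, `|ζ| = 1` and `|e^{2iθ} + 1| = 2 |cos θ|` give the factor `4 cos(π/9) cos(2π/9)`.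
-/

open Complex

theorem IsPrimitiveRoot.sq_sub_self_add_one_eq_zero {R : Type*} [CommRing R] [IsDomain R] {ω : R}
    (h : IsPrimitiveRoot ω 6) : ω ^ 2 - ω + 1 = 0 := by
  simpa [Polynomial.cyclotomic_six] using h.isRoot_cyclotomic (by norm_num)

theorem pow_six_mul_eq_of_pow_twelve_sub_pow_six_add_one_eq_zero {R : Type*} [CommRing R] {z : R}
    (h : z ^ 12 - z ^ 6 + 1 = 0) :
    z ^ 6 * (z ^ 7 + z ^ 3 - z) =
      (z ^ 4 + 1) * (z ^ 8 + 1) * (z ^ 11 - z ^ 7 + z ^ 5 - z ^ 3 + z) := by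
  linear_combination (-z ^ 11 - 2 * z ^ 5 + z ^ 3 - z) * h

theorem Complex.norm_exp_two_mul_mul_I_add_one (θ : ℝ) :
    ‖exp (2 * θ * I) + 1‖ = 2 * |Real.cos θ| := by
  have h : exp (2 * θ * I) + 1 = exp (θ * I) * (2 * Real.cos θ) := by
    rw [ofReal_cos, two_cos, mul_add, ← exp_add, ← exp_add, ← exp_zero]
    ring_nf
  rw [h, norm_mul, norm_exp_ofReal_mul_I, one_mul, norm_mul, norm_real, Real.norm_eq_abs]
  norm_num

/-- For `ζ = e^{2πi/36}`:
`|ζ⁷ + ζ³ − ζ| = 4 cos(π/9) cos(2π/9) · |ζ¹¹ − ζ⁷ + ζ⁵ − ζ³ + ζ|`. -/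
theorem stmt13 (ζ : ℂ) (hζ : ζ = Complex.exp (2 * Real.pi * Complex.I / 36)) :
    ‖ζ^7 + ζ^3 - ζ‖ =
      4 * Real.cos (Real.pi / 9) * Real.cos (2 * Real.pi / 9) *
        ‖ζ^11 - ζ^7 + ζ^5 - ζ^3 + ζ‖ := by
  have hprim : IsPrimitiveRoot ζ 36 := by
    simpa [hζ] using isPrimitiveRoot_exp 36 (by norm_num)
  have hcyc : ζ ^ 12 - ζ ^ 6 + 1 = 0 := by
    have h6 : IsPrimitiveRoot (ζ ^ 6) 6 := hprim.pow (by norm_num) (by norm_num)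
    simpa [← pow_mul] using h6.sq_sub_self_add_one_eq_zero
  have hpow (n : ℕ) (θ : ℝ) (hθ : 2 * θ = n * Real.pi / 18) : ζ ^ n = exp (2 * θ * I) := by
    rw [hζ, ← exp_nat_mul, show (2 : ℂ) * θ = n * Real.pi / 18 by exact_mod_cast hθ]
    ring_nf
  have hcos (x : ℝ) (h₀ : 0 ≤ x) (h₁ : x ≤ Real.pi / 2) : |Real.cos x| = Real.cos x :=
    abs_of_nonneg (Real.cos_nonneg_of_mem_Icc ⟨by linarith [Real.pi_pos], h₁⟩)
  calc ‖ζ ^ 7 + ζ ^ 3 - ζ‖ = ‖ζ ^ 6 * (ζ ^ 7 + ζ ^ 3 - ζ)‖ := by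
        rw [norm_mul, norm_pow, hprim.norm'_eq_one (by norm_num), one_pow, one_mul]
    _ = ‖(ζ ^ 4 + 1) * (ζ ^ 8 + 1) * (ζ ^ 11 - ζ ^ 7 + ζ ^ 5 - ζ ^ 3 + ζ)‖ := by
        rw [pow_six_mul_eq_of_pow_twelve_sub_pow_six_add_one_eq_zero hcyc]
    _ = _ := by
        rw [norm_mul, norm_mul, hpow 4 (Real.pi / 9) (by ring), hpow 8 (2 * Real.pi / 9) (by ring),
          norm_exp_two_mul_mul_I_add_one, norm_exp_two_mul_mul_I_add_one,
          hcos _ (by positivity) (by linarith [Real.pi_pos]),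
          hcos _ (by positivity) (by linarith [Real.pi_pos])]
        ring
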